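/- Let λ ∈ X∨₊ with λ ≠ 0. Then there exist μ ∈ M, an integer k ≥ 0 and short coroots β₁∨, …, βₖ∨ such that λ = μ + β₁∨ + ⋯ + βₖ∨ and every partial sum μ + β₁∨ + ⋯ + βⱼ∨ (for 0 ≤ j ≤ k) is dominant. -/

import Mathlib

open scoped BigOperators Classical

noncomputable section

/-- Data of a finite crystallographic root system in a pair of vector spaces `V`, `V'`
(in perfect duality via `pair`), with a chosen base `Δ` and a cocharacter lattice `X`. -/
structure RootSystemData (V V' : Type) [AddCommGroup V] [Module ℝ V]
    [FiniteDimensional ℝ V] [AddCommGroup V'] [Module ℝ V'] [FiniteDimensional ℝ V'] where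
  /-- The canonical pairing between `V` and `V'`. -/
  pair : V →ₗ[ℝ] V' →ₗ[ℝ] ℝ
  /-- The (finite) set of roots. -/
  R : Finset V
  /-- The coroot attached to a root. -/
  coroot : V → V'
  root_ne_zero : ∀ α ∈ R, α ≠ (0 : V)
  neg_mem : ∀ α ∈ R, -α ∈ R
  coroot_neg : ∀ α ∈ R, coroot (-α) = -coroot α
  pair_self_eq_two : ∀ α ∈ R, pair α (coroot α) = 2
  crystallographic : ∀ α ∈ R, ∀ β ∈ R, ∃ n : ℤ, pair α (coroot β) = (n : ℝ)
  reflect_root_mem : ∀ α ∈ R, ∀ β ∈ R, β - pair β (coroot α) • α ∈ R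
  reflect_coroot_mem : ∀ α ∈ R, ∀ β ∈ R,
    coroot β - pair α (coroot β) • coroot α ∈ coroot '' R
  /-- The chosen base (set of simple roots). -/
  Δ : Finset V
  base_subset : Δ ⊆ R
  base_indep : LinearIndependent ℝ (fun a : (Δ : Set V) => (a : V))
  base_generates : ∀ α ∈ R,
    α ∈ AddSubmonoid.closure (Δ : Set V) ∨ -α ∈ AddSubmonoid.closure (Δ : Set V)
  /-- The lattice `X∨`. -/
  X : AddSubgroup V'
  coroot_mem_X : ∀ α ∈ R, coroot α ∈ X
  X_le_span : (X : Set V') ⊆ (Submodule.span ℝ (coroot '' (R : Set V)) : Set V')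
  pair_X_int : ∀ α ∈ R, ∀ x ∈ X, ∃ n : ℤ, pair α x = (n : ℝ)

namespace RootSystemData

variable {V V' : Type} [AddCommGroup V] [Module ℝ V] [FiniteDimensional ℝ V]
  [AddCommGroup V'] [Module ℝ V'] [FiniteDimensional ℝ V']
  (D : RootSystemData V V')

/-- The set `R₊` of positive roots: roots which are `ℕ`-linear combinations of the base. -/
def Rpos : Finset V := D.R.filter fun α => α ∈ AddSubmonoid.closure (D.Δ : Set V)

/-- The coroot lattice `Q∨`. -/
def Qc : AddSubgroup V' := AddSubgroup.closure (D.coroot '' (D.R : Set V))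

/-- The positive cone `Q∨₊` generated by the coroots of the positive roots. -/
def Qpos : AddSubmonoid V' := AddSubmonoid.closure (D.coroot '' (D.Rpos : Set V))

/-- The dominance order: `ν ≤ λ` iff `λ - ν ∈ Q∨₊`. -/
def leQ (ν lam : V') : Prop := lam - ν ∈ D.Qpos

/-- Dominance: `ν` is dominant iff `⟨α, ν⟩ ≥ 0` for every positive root `α`. -/
def Dominant (ν : V') : Prop := ∀ α ∈ D.Rpos, 0 ≤ D.pair α ν

/-- The set `X∨₊` of dominant elements of the lattice. -/
def Xplus : Set V' := {x | x ∈ D.X ∧ D.Dominant x}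

/-- The set `M` of minimal elements of `X∨₊ \ {0}` for the dominance order. -/
def MSet : Set V' :=
  {μ | μ ∈ D.Xplus ∧ μ ≠ 0 ∧ ∀ ν ∈ D.Xplus, ν ≠ 0 → D.leQ ν μ → ν = μ}

/-- The reflection on `V` attached to a root `α`. -/
def reflV (α : V) (hα : α ∈ D.R) : V ≃ₗ[ℝ] V :=
  Module.reflection (show D.pair.flip (D.coroot α) α = 2 from D.pair_self_eq_two α hα)

/-- The reflection on `V'` attached to a root `α`. -/
def reflV' (α : V) (hα : α ∈ D.R) : V' ≃ₗ[ℝ] V' :=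
  Module.reflection (show D.pair α (D.coroot α) = 2 from D.pair_self_eq_two α hα)

/-- The Weyl group `W`, acting simultaneously on `V` (first component)
and on `V'` (second component); it is generated by the pairs of reflections
attached to the roots. -/
def weyl : Subgroup ((V ≃ₗ[ℝ] V) × (V' ≃ₗ[ℝ] V')) :=
  Subgroup.closure {g | ∃ α, ∃ hα : α ∈ D.R, g = (D.reflV α hα, D.reflV' α hα)}

/-- The orbit `Wμ` of `μ ∈ V'` under the Weyl group. -/
def Worbit (μ : V') : Set V' := {ν | ∃ g ∈ D.weyl, ν = g.2 μ}

/-- The set `Ω(λ) = {ν ∈ X∨ : wν ≤ λ for all w ∈ W}`. -/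
def Omega (lam : V') : Set V' :=
  {ν | ν ∈ D.X ∧ ∀ g ∈ D.weyl, D.leQ (g.2 ν) lam}

/-- Two roots are linked when they are non-orthogonal. -/
def Linked (α β : V) : Prop := α ∈ D.R ∧ β ∈ D.R ∧ D.pair α (D.coroot β) ≠ 0

/-- Two roots lie in the same irreducible component iff they are connected by a
chain of non-orthogonal roots. -/
def SameComponent (α β : V) : Prop := Relation.EqvGen D.Linked α β

/-- The half-sum `ρ` of the positive roots. -/
def rho : V := (2 : ℝ)⁻¹ • ∑ α ∈ D.Rpos, α

/-- A `W`-invariant inner product on `V'`. -/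
structure WInvInner where
  form : V' →ₗ[ℝ] V' →ₗ[ℝ] ℝ
  symm : ∀ x y, form x y = form y x
  posdef : ∀ x, x ≠ 0 → 0 < form x x
  invariant : ∀ g ∈ D.weyl, ∀ x y, form (g.2 x) (g.2 y) = form x y

/-- `β` is a root whose coroot is short: for every `W`-invariant inner product `B` on `V'`,
`B(β∨, β∨) ≤ B(α∨, α∨)` for every root `α` in the same irreducible component as `β`. -/
def IsShortCoroot (β : V) : Prop :=
  β ∈ D.R ∧ ∀ B : D.WInvInner, ∀ α ∈ D.R, D.SameComponent α β →
    B.form (D.coroot β) (D.coroot β) ≤ B.form (D.coroot α) (D.coroot α)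

end RootSystemData

/-!
Let `(·, ·)` be the form `(x, y) ↦ ∑_{α ∈ R} ⟨α, x⟩ ⟨α, y⟩` on `V'`. It is invariant under the
reflections, so `2 (γ∨, x) = ⟨γ, x⟩ (γ∨, γ∨)`, and every `W`-invariant inner product is
proportional to it on the coroots of an irreducible component: shortness can be measured with
`(·, ·)`. For dominant `ν` and `0 ≠ q ∈ Q∨₊` one has `(ν, ν) < (ν + q, ν + q)`.

Induct on the height `⟨2ρ, λ⟩`. If `λ ∉ M`, pick a dominant `0 ≠ ν < λ`. Were `⟨γ, λ⟩ ≤ 1` for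
all roots, `λ` would descend to `ν` by length-preserving reflections `s_ε` subtracting positive
coroots, which is impossible. So some root pairs at least `2` with `λ`; then a short one does, and
such a short `c` with `c∨` of minimal height keeps `λ - c∨` dominant. Recurse on `λ - c∨`, unless
`λ = c∨`: the same descent shows `c∨ ∈ M` unless some coroot `δ∨` differs from `c∨` by a radical
element `μ`, and then `μ ∈ M` and `λ = μ + δ∨`.
-/

namespace AddSubmonoid

variable {M F : Type*} [FunLike F M ℝ] {S : Set M}

section AddCommMonoid

variable [AddCommMonoid M] [AddMonoidHomClass F M ℝ]

theorem map_nonneg_of_mem_closure (f : F) (hf : ∀ s ∈ S, 0 ≤ f s) {x : M}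
    (hx : x ∈ closure S) : 0 ≤ f x := by
  induction hx using closure_induction with
  | mem s hs => exact hf s hs
  | zero => simp
  | add x y _ _ hx hy => rw [map_add]; exact add_nonneg hx hy

theorem eq_zero_of_mem_closure_of_map_nonpos (f : F) (hf : ∀ s ∈ S, 0 < f s) {x : M}
    (hx : x ∈ closure S) (hfx : f x ≤ 0) : x = 0 := by
  have hf' : ∀ s ∈ S, 0 ≤ f s := fun s hs => (hf s hs).le
  induction hx using closure_induction with
  | mem s hs => exact absurd hfx (hf s hs).not_ge
  | zero => rfl
  | add x y hx hy ihx ihy =>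
    rw [map_add] at hfx
    have := map_nonneg_of_mem_closure f hf' hx
    have := map_nonneg_of_mem_closure f hf' hy
    rw [ihx (by linarith), ihy (by linarith), add_zero]

end AddCommMonoid

theorem exists_map_pos_sub_mem_closure [AddCommGroup M] [AddMonoidHomClass F M ℝ] (f : F)
    {x : M} (hx : x ∈ closure S) (hfx : 0 < f x) :
    ∃ s ∈ S, 0 < f s ∧ x - s ∈ closure S := by
  induction hx using closure_induction with
  | mem s hs => exact ⟨s, hs, hfx, by simp⟩
  | zero => simp at hfx
  | add x y hx hy ihx ihy =>
    rw [map_add] at hfx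
    by_cases hpos : 0 < f x
    · obtain ⟨s, hs, hfs, hxs⟩ := ihx hpos
      exact ⟨s, hs, hfs, by simpa [add_sub_right_comm] using add_mem hxs hy⟩
    · obtain ⟨s, hs, hfs, hys⟩ := ihy (by linarith)
      exact ⟨s, hs, hfs, by simpa [add_sub_assoc] using add_mem hx hys⟩

end AddSubmonoid

theorem LinearIndepOn.eq_zero_of_mem_closure_of_neg_mem {V : Type*} [AddCommGroup V]
    [Module ℝ V] {s : Set V} (hs : LinearIndepOn ℝ id s) {v : V}
    (hv : v ∈ AddSubmonoid.closure s) (hv' : -v ∈ AddSubmonoid.closure s) : v = 0 := by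
  -- the sum of the coordinates in a basis extending `s` is positive on `s`
  set f := (Module.Basis.extend hs).sumCoords
  have hf : ∀ x ∈ s, 0 < f x := fun x hx => by
    have h := (Module.Basis.extend hs).sumCoords_self_apply (i := ⟨x, hs.subset_extend _ hx⟩)
    rw [Module.Basis.extend_apply_self] at h
    exact h ▸ one_pos
  have := AddSubmonoid.map_nonneg_of_mem_closure f (fun x hx => (hf x hx).le) hv'
  exact AddSubmonoid.eq_zero_of_mem_closure_of_map_nonpos f hf hv (by simpa using this)

section IntValued

variable {r : ℝ}

theorem one_le_of_pos_of_int (hr : ∃ n : ℤ, r = n) (h : 0 < r) : 1 ≤ r := by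
  obtain ⟨n, rfl⟩ := hr
  exact_mod_cast (show (0 : ℤ) < n by exact_mod_cast h)

theorem le_one_of_lt_two_of_int (hr : ∃ n : ℤ, r = n) (h : r < 2) : r ≤ 1 := by
  obtain ⟨n, rfl⟩ := hr
  exact_mod_cast Int.lt_add_one_iff.mp (show n < 2 by exact_mod_cast h)

theorem eq_one_or_eq_two_of_int (hr : ∃ n : ℤ, r = n) (h₀ : 0 < r) (h₂ : r ≤ 2) :
    r = 1 ∨ r = 2 := by
  obtain ⟨n, rfl⟩ := hr
  have : (0 : ℤ) < n := by exact_mod_cast h₀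
  have : n ≤ 2 := by exact_mod_cast h₂
  obtain rfl | rfl : n = 1 ∨ n = 2 := by omega
  all_goals norm_num

end IntValued

theorem Fin.sum_filter_val_lt_snoc {α M : Type*} [AddCommMonoid M] {k : ℕ} (β : Fin k → α)
    (c : α) (g : α → M) (j : ℕ) :
    ∑ i ∈ Finset.univ.filter (fun i : Fin (k + 1) => (i : ℕ) < j),
        g (Fin.snoc (α := fun _ => α) β c i) =
      ∑ i ∈ Finset.univ.filter (fun i : Fin k => (i : ℕ) < j), g (β i) +
        if k < j then g c else 0 := by
  simp only [Finset.sum_filter, Fin.sum_univ_castSucc, Fin.snoc_castSucc, Fin.snoc_last,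
    Fin.val_castSucc, Fin.val_last]

namespace RootSystemData

variable {V V' : Type} [AddCommGroup V] [Module ℝ V] [FiniteDimensional ℝ V]
  [AddCommGroup V'] [Module ℝ V'] [FiniteDimensional ℝ V'] {D : RootSystemData V V'}
  {a α β γ δ ε c : V} {x y z μ ν q lam : V'}

theorem Rpos_subset : D.Rpos ⊆ D.R := Finset.filter_subset _ _

theorem mem_Rpos_iff : α ∈ D.Rpos ↔ α ∈ D.R ∧ α ∈ AddSubmonoid.closure (D.Δ : Set V) :=
  Finset.mem_filter

theorem neg_notMem_Rpos (hα : α ∈ D.Rpos) : -α ∉ D.Rpos := fun hα' =>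
  D.root_ne_zero α (Rpos_subset hα) (LinearIndepOn.eq_zero_of_mem_closure_of_neg_mem
    D.base_indep (mem_Rpos_iff.1 hα).2 (mem_Rpos_iff.1 hα').2)

theorem neg_mem_Rpos_of_notMem (hα : α ∈ D.R) (h : α ∉ D.Rpos) : -α ∈ D.Rpos := by
  rcases D.base_generates α hα with h' | h'
  · exact absurd (mem_Rpos_iff.2 ⟨hα, h'⟩) h
  · exact mem_Rpos_iff.2 ⟨D.neg_mem α hα, h'⟩

theorem coroot_ne_zero (hγ : γ ∈ D.R) : D.coroot γ ≠ 0 := fun h => by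
  simpa [h] using D.pair_self_eq_two γ hγ

theorem reflV_apply (hγ : γ ∈ D.R) (v : V) :
    D.reflV γ hγ v = v - D.pair v (D.coroot γ) • γ :=
  Module.reflection_apply _ _

theorem reflV'_apply (hγ : γ ∈ D.R) (x : V') :
    D.reflV' γ hγ x = x - D.pair γ x • D.coroot γ :=
  Module.reflection_apply _ _

theorem reflV_reflV (hγ : γ ∈ D.R) (v : V) : D.reflV γ hγ (D.reflV γ hγ v) = v :=
  Module.involutive_reflection _ v

theorem reflV_mem (hγ : γ ∈ D.R) (hα : α ∈ D.R) : D.reflV γ hγ α ∈ D.R := by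
  rw [reflV_apply]; exact D.reflect_root_mem γ hγ α hα

theorem exists_coroot_eq_reflV' (hγ : γ ∈ D.R) (hβ : β ∈ D.R) :
    ∃ δ ∈ D.R, D.coroot δ = D.reflV' γ hγ (D.coroot β) := by
  obtain ⟨δ, hδ, h⟩ := D.reflect_coroot_mem γ hγ β hβ
  exact ⟨δ, hδ, by rw [h, reflV'_apply]⟩

theorem pair_reflV' (hγ : γ ∈ D.R) (α : V) (x : V') :
    D.pair α (D.reflV' γ hγ x) = D.pair (D.reflV γ hγ α) x := by
  simp only [reflV'_apply, reflV_apply, map_sub, map_smul, LinearMap.sub_apply,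
    LinearMap.smul_apply, smul_eq_mul]
  ring

theorem pair_reflV_coroot (hγ : γ ∈ D.R) (α : V) :
    D.pair (D.reflV γ hγ α) (D.coroot γ) = -D.pair α (D.coroot γ) := by
  simp only [reflV_apply, map_sub, map_smul, LinearMap.sub_apply, LinearMap.smul_apply,
    smul_eq_mul, D.pair_self_eq_two γ hγ]
  ring

/-- The pairing with `2ρ`. -/
def ht : V' →ₗ[ℝ] ℝ := ∑ α ∈ D.Rpos, D.pair α

theorem ht_apply (x : V') : D.ht x = ∑ α ∈ D.Rpos, D.pair α x := by
  simp [ht]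

theorem ht_nonneg_of_dominant (hx : D.Dominant x) : 0 ≤ D.ht x := by
  rw [ht_apply]; exact Finset.sum_nonneg hx

theorem pair_coroot_pos_of_reflV_notMem_Rpos (hγ : γ ∈ D.Rpos) (hα : α ∈ D.Rpos)
    (h : D.reflV γ (Rpos_subset hγ) α ∉ D.Rpos) : 0 < D.pair α (D.coroot γ) := by
  by_contra! hle
  obtain ⟨n, hn⟩ := D.crystallographic α (Rpos_subset hα) γ (Rpos_subset hγ)
  obtain ⟨k, rfl⟩ := Int.exists_eq_neg_ofNat (show n ≤ 0 by exact_mod_cast hn ▸ hle)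
  refine h (mem_Rpos_iff.2 ⟨reflV_mem _ (Rpos_subset hα), ?_⟩)
  rw [reflV_apply, hn, Int.cast_neg, Int.cast_natCast, neg_smul, sub_neg_eq_add,
    Nat.cast_smul_eq_nsmul]
  exact add_mem (mem_Rpos_iff.1 hα).2 (AddSubmonoid.nsmul_mem _ (mem_Rpos_iff.1 hγ).2 k)

theorem two_le_ht_coroot (hγ : γ ∈ D.Rpos) : 2 ≤ D.ht (D.coroot γ) := by
  have hγR := Rpos_subset hγ
  set s := D.reflV γ hγR
  rw [ht_apply, ← Finset.sum_filter_add_sum_filter_not D.Rpos (fun α => s α ∈ D.Rpos)]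
  -- `s` is an involution of the first index set that negates the summand
  have hcancel : ∑ α ∈ D.Rpos.filter (fun α => s α ∈ D.Rpos), D.pair α (D.coroot γ) = 0 := by
    refine Finset.sum_involution (fun α _ => s α) (fun α _ => by rw [pair_reflV_coroot]; ring)
      (fun α _ hne heq => hne ?_) (fun α hα => ?_) (fun α _ => reflV_reflV hγR α)
    · have := pair_reflV_coroot hγR α
      rw [heq] at this
      linarith
    · rw [Finset.mem_filter] at hα ⊢
      exact ⟨hα.2, by rw [reflV_reflV]; exact hα.1⟩
  have hγmem : γ ∈ D.Rpos.filter (fun α => s α ∉ D.Rpos) := by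
    refine Finset.mem_filter.2 ⟨hγ, ?_⟩
    rw [show s γ = -γ from Module.reflection_apply_self _]
    exact neg_notMem_Rpos hγ
  rw [hcancel, zero_add, ← D.pair_self_eq_two γ hγR]
  refine Finset.single_le_sum (f := fun α => D.pair α (D.coroot γ)) (fun α hα => ?_) hγmem
  rw [Finset.mem_filter] at hα
  exact (pair_coroot_pos_of_reflV_notMem_Rpos hγ hα.1 hα.2).le

theorem ht_coroot_pos (hγ : γ ∈ D.Rpos) : 0 < D.ht (D.coroot γ) := by
  linarith [two_le_ht_coroot hγ]

theorem ht_nonneg_of_mem_Qpos (hx : x ∈ D.Qpos) : 0 ≤ D.ht x := by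
  refine AddSubmonoid.map_nonneg_of_mem_closure D.ht ?_ hx
  rintro _ ⟨α, hα, rfl⟩
  exact (ht_coroot_pos hα).le

theorem eq_zero_of_mem_Qpos_of_ht_nonpos (hx : x ∈ D.Qpos) (h : D.ht x ≤ 0) : x = 0 := by
  refine AddSubmonoid.eq_zero_of_mem_closure_of_map_nonpos D.ht ?_ hx h
  rintro _ ⟨α, hα, rfl⟩
  exact ht_coroot_pos hα

variable (D) in
/-- Only positive semidefinite: its kernel is the radical, as the pairing need not be perfect. -/
def corootForm : LinearMap.BilinForm ℝ V' := ∑ α ∈ D.R, (D.pair α).smulRight (D.pair α)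

theorem corootForm_apply (x y : V') :
    D.corootForm x y = ∑ α ∈ D.R, D.pair α x * D.pair α y := by
  simp [corootForm]

theorem corootForm_comm (x y : V') : D.corootForm x y = D.corootForm y x := by
  simp only [corootForm_apply, mul_comm]

theorem corootForm_self_nonneg (x : V') : 0 ≤ D.corootForm x x := by
  rw [corootForm_apply]
  exact Finset.sum_nonneg fun α _ => mul_self_nonneg _

variable (D) in
def IsRadical (z : V') : Prop := ∀ α ∈ D.R, D.pair α z = 0

theorem isRadical_of_corootForm_self_eq_zero (h : D.corootForm z z = 0) : D.IsRadical z :=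
  fun α hα => mul_self_eq_zero.1 <|
    (Finset.sum_eq_zero_iff_of_nonneg fun _ _ => mul_self_nonneg _).1
      ((corootForm_apply z z).symm.trans h) α hα

theorem IsRadical.corootForm_eq_zero (hz : D.IsRadical z) (y : V') : D.corootForm z y = 0 := by
  rw [corootForm_apply]
  exact Finset.sum_eq_zero fun α hα => by rw [hz α hα, zero_mul]

theorem IsRadical.ht_eq_zero (hz : D.IsRadical z) : D.ht z = 0 := by
  rw [ht_apply]
  exact Finset.sum_eq_zero fun α hα => hz α (Rpos_subset hα)

theorem IsRadical.neg (hz : D.IsRadical z) : D.IsRadical (-z) := fun α hα => by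
  rw [map_neg, hz α hα, neg_zero]

variable (D) in
def IsReflInvariant (F : LinearMap.BilinForm ℝ V') : Prop :=
  ∀ γ (hγ : γ ∈ D.R) x y, F (D.reflV' γ hγ x) (D.reflV' γ hγ y) = F x y

theorem corootForm_isReflInvariant : D.IsReflInvariant D.corootForm := by
  intro γ hγ x y
  simp only [corootForm_apply, pair_reflV']
  exact Finset.sum_nbij' (D.reflV γ hγ) (D.reflV γ hγ) (fun _ => reflV_mem hγ)
    (fun _ => reflV_mem hγ) (fun α _ => reflV_reflV hγ α) (fun α _ => reflV_reflV hγ α)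
    (fun _ _ => rfl)

theorem WInvInner.isReflInvariant (B : D.WInvInner) : D.IsReflInvariant B.form :=
  fun γ hγ => B.invariant _ (Subgroup.subset_closure ⟨γ, hγ, rfl⟩)

theorem IsReflInvariant.two_mul_apply_coroot {F : LinearMap.BilinForm ℝ V'}
    (hF : D.IsReflInvariant F) (hγ : γ ∈ D.R) (x : V') :
    2 * F (D.coroot γ) x = D.pair γ x * F (D.coroot γ) (D.coroot γ) := by
  have h := hF γ hγ (D.coroot γ) x
  rw [show D.reflV' γ hγ (D.coroot γ) = -D.coroot γ from Module.reflection_apply_self _,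
    reflV'_apply] at h
  simp only [map_neg, map_sub, map_smul, LinearMap.neg_apply, smul_eq_mul] at h
  linarith

theorem two_mul_corootForm_coroot (hγ : γ ∈ D.R) (x : V') :
    2 * D.corootForm (D.coroot γ) x = D.pair γ x * D.corootForm (D.coroot γ) (D.coroot γ) :=
  corootForm_isReflInvariant.two_mul_apply_coroot hγ x

theorem corootForm_coroot_pos (hγ : γ ∈ D.R) : 0 < D.corootForm (D.coroot γ) (D.coroot γ) := by
  have := Finset.single_le_sum (f := fun α => D.pair α (D.coroot γ) * D.pair α (D.coroot γ))
    (fun _ _ => mul_self_nonneg _) hγ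
  rw [← corootForm_apply, D.pair_self_eq_two γ hγ] at this
  linarith

theorem corootForm_reflV' (hγ : γ ∈ D.R) (x : V') :
    D.corootForm (D.reflV' γ hγ x) (D.reflV' γ hγ x) = D.corootForm x x :=
  corootForm_isReflInvariant γ hγ x x

theorem pair_coroot_eq_zero_iff_corootForm_eq_zero (hα : α ∈ D.R) :
    D.pair α (D.coroot β) = 0 ↔ D.corootForm (D.coroot α) (D.coroot β) = 0 := by
  have h := two_mul_corootForm_coroot hα (D.coroot β)
  have := corootForm_coroot_pos hα
  constructor <;> intro h0
  · rw [h0, zero_mul] at h; linarith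
  · rw [h0, mul_zero] at h
    exact (mul_eq_zero.1 h.symm).resolve_right this.ne'

theorem linked_iff_corootForm_ne_zero (hα : α ∈ D.R) (hβ : β ∈ D.R) :
    D.Linked α β ↔ D.corootForm (D.coroot α) (D.coroot β) ≠ 0 :=
  ⟨fun h => (pair_coroot_eq_zero_iff_corootForm_eq_zero hα).not.1 h.2.2,
    fun h => ⟨hα, hβ, (pair_coroot_eq_zero_iff_corootForm_eq_zero hα).not.2 h⟩⟩

theorem Linked.symm (h : D.Linked α β) : D.Linked β α :=
  (linked_iff_corootForm_ne_zero h.2.1 h.1).2 <| by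
    rw [corootForm_comm]; exact (linked_iff_corootForm_ne_zero h.1 h.2.1).1 h

theorem Linked.sameComponent (h : D.Linked α β) : D.SameComponent α β :=
  Relation.EqvGen.rel _ _ h

theorem Linked.refl (hα : α ∈ D.R) : D.Linked α α :=
  ⟨hα, hα, by rw [D.pair_self_eq_two α hα]; norm_num⟩

theorem SameComponent.trans (h : D.SameComponent α β) (h' : D.SameComponent β γ) :
    D.SameComponent α γ :=
  Relation.EqvGen.trans _ _ _ h h'

theorem SameComponent.reflTransGen (h : D.SameComponent α β) :
    Relation.ReflTransGen D.Linked α β := by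
  have : Std.Symm D.Linked := ⟨fun _ _ => Linked.symm⟩
  rwa [SameComponent, Relation.EqvGen.eqvGen_eq_reflTransGen] at h

variable (D) in
def IsCorootFormShort (γ : V) : Prop :=
  γ ∈ D.R ∧ ∀ δ ∈ D.R, D.SameComponent δ γ →
    D.corootForm (D.coroot γ) (D.coroot γ) ≤ D.corootForm (D.coroot δ) (D.coroot δ)

theorem IsCorootFormShort.of_sameComponent (hγ : D.IsCorootFormShort γ) (hδ : δ ∈ D.R)
    (hδγ : D.SameComponent δ γ)
    (hN : D.corootForm (D.coroot δ) (D.coroot δ) = D.corootForm (D.coroot γ) (D.coroot γ)) :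
    D.IsCorootFormShort δ :=
  ⟨hδ, fun ρ hρ hρδ => hN ▸ hγ.2 ρ hρ (hρδ.trans hδγ)⟩

/-- A shorter root of the component can be carried along a chain of linked roots to `γ` by
reflections, which keep its length. -/
theorem isCorootFormShort_of_forall_linked (hγ : γ ∈ D.R)
    (h : ∀ a, D.Linked a γ →
      D.corootForm (D.coroot γ) (D.coroot γ) ≤ D.corootForm (D.coroot a) (D.coroot a)) :
    D.IsCorootFormShort γ := by
  refine ⟨hγ, fun δ hδ hδγ => ?_⟩
  by_contra! hlt
  suffices key : ∀ b, Relation.ReflTransGen D.Linked b γ → ∀ a ∈ D.R,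
      D.corootForm (D.coroot a) (D.coroot a) < D.corootForm (D.coroot γ) (D.coroot γ) →
      D.Linked a b → False from
    key δ hδγ.reflTransGen δ hδ hlt (Linked.refl hδ)
  intro b hb
  induction hb using Relation.ReflTransGen.head_induction_on with
  | refl => exact fun a _ ha hlink => (h a hlink).not_gt ha
  | @head b c hbc _ ih =>
    intro a haR ha hab
    by_cases hac : D.Linked a c
    · exact ih a haR ha hac
    obtain ⟨a', ha'R, ha'⟩ := exists_coroot_eq_reflV' hbc.1 haR
    refine ih a' ha'R (by rwa [ha', corootForm_reflV'])
      ((linked_iff_corootForm_ne_zero ha'R hbc.2.1).2 ?_)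
    have hac0 : D.corootForm (D.coroot a) (D.coroot c) = 0 := by
      by_contra hne; exact hac ((linked_iff_corootForm_ne_zero haR hbc.2.1).2 hne)
    rw [ha', reflV'_apply, map_sub, map_smul, LinearMap.sub_apply, LinearMap.smul_apply, hac0,
      zero_sub, neg_ne_zero, smul_eq_mul]
    exact mul_ne_zero hab.symm.2.2 ((linked_iff_corootForm_ne_zero hbc.1 hbc.2.1).1 hbc)

theorem IsReflInvariant.mul_corootForm_eq_of_linked {F : LinearMap.BilinForm ℝ V'}
    (hF : D.IsReflInvariant F) (hFs : ∀ x y, F x y = F y x) (h : D.Linked α β) :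
    F (D.coroot α) (D.coroot α) * D.corootForm (D.coroot β) (D.coroot β) =
      F (D.coroot β) (D.coroot β) * D.corootForm (D.coroot α) (D.coroot α) := by
  obtain ⟨hα, hβ, hne⟩ := h
  have hF₁ := hF.two_mul_apply_coroot hα (D.coroot β)
  have hF₂ := hF.two_mul_apply_coroot hβ (D.coroot α)
  have hN₁ := two_mul_corootForm_coroot hα (D.coroot β)
  have hN₂ := two_mul_corootForm_coroot hβ (D.coroot α)
  rw [hFs] at hF₁
  rw [corootForm_comm] at hN₁
  refine mul_left_cancel₀ hne ?_
  linear_combination D.corootForm (D.coroot β) (D.coroot β) * (hF₂ - hF₁) -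
    F (D.coroot β) (D.coroot β) * (hN₂ - hN₁)

theorem IsReflInvariant.mul_corootForm_eq_of_sameComponent {F : LinearMap.BilinForm ℝ V'}
    (hF : D.IsReflInvariant F) (hFs : ∀ x y, F x y = F y x) (h : D.SameComponent α β) :
    F (D.coroot α) (D.coroot α) * D.corootForm (D.coroot β) (D.coroot β) =
      F (D.coroot β) (D.coroot β) * D.corootForm (D.coroot α) (D.coroot α) := by
  have hr := h.reflTransGen
  clear h
  induction hr using Relation.ReflTransGen.head_induction_on with
  | refl => rfl
  | @head a c hac _ ih =>
    have h₁ := hF.mul_corootForm_eq_of_linked hFs hac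
    refine mul_left_cancel₀ (corootForm_coroot_pos hac.2.1).ne' ?_
    linear_combination D.corootForm (D.coroot β) (D.coroot β) * h₁ +
      D.corootForm (D.coroot a) (D.coroot a) * ih

theorem IsCorootFormShort.isShortCoroot (hγ : D.IsCorootFormShort γ) : D.IsShortCoroot γ := by
  refine ⟨hγ.1, fun B α hα hαγ => ?_⟩
  have hratio := B.isReflInvariant.mul_corootForm_eq_of_sameComponent B.symm hαγ
  have hBα := B.posdef _ (coroot_ne_zero hα)
  refine le_of_mul_le_mul_right ?_ (corootForm_coroot_pos hα)
  rw [← hratio]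
  exact mul_le_mul_of_nonneg_left (hγ.2 α hα hαγ) hBα.le

theorem corootForm_coroot_sub (hε : ε ∈ D.R) (γ : V) :
    D.corootForm (D.coroot γ - D.coroot ε) (D.coroot γ - D.coroot ε) =
      D.corootForm (D.coroot γ) (D.coroot γ) -
        D.pair ε (D.coroot γ) * D.corootForm (D.coroot ε) (D.coroot ε) +
        D.corootForm (D.coroot ε) (D.coroot ε) := by
  have h := two_mul_corootForm_coroot hε (D.coroot γ)
  have hc := corootForm_comm (D := D) (D.coroot ε) (D.coroot γ)
  simp only [map_sub, LinearMap.sub_apply]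
  linear_combination -h + hc

theorem pair_coroot_le_two (hε : ε ∈ D.R)
    (hN : D.corootForm (D.coroot γ) (D.coroot γ) ≤ D.corootForm (D.coroot ε) (D.coroot ε)) :
    D.pair ε (D.coroot γ) ≤ 2 := by
  have h := corootForm_coroot_sub hε γ
  have := corootForm_self_nonneg (D := D) (D.coroot γ - D.coroot ε)
  exact le_of_mul_le_mul_right (by linarith) (corootForm_coroot_pos hε)

theorem isRadical_coroot_sub_of_pair_eq_two (hε : ε ∈ D.R)
    (hN : D.corootForm (D.coroot γ) (D.coroot γ) ≤ D.corootForm (D.coroot ε) (D.coroot ε))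
    (h2 : D.pair ε (D.coroot γ) = 2) : D.IsRadical (D.coroot γ - D.coroot ε) := by
  refine isRadical_of_corootForm_self_eq_zero (le_antisymm ?_ (corootForm_self_nonneg _))
  rw [corootForm_coroot_sub hε, h2]
  linarith

theorem IsRadical.corootForm_eq (h : D.IsRadical (x - y)) (z : V') :
    D.corootForm x z = D.corootForm y z := by
  have := h.corootForm_eq_zero z
  rw [map_sub, LinearMap.sub_apply] at this
  linarith

theorem IsRadical.corootForm_self_eq (h : D.IsRadical (x - y)) :
    D.corootForm x x = D.corootForm y y := by
  rw [h.corootForm_eq, corootForm_comm, h.corootForm_eq]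

theorem pair_eq_of_isRadical_coroot_sub (hα : α ∈ D.R) (hβ : β ∈ D.R)
    (h : D.IsRadical (D.coroot α - D.coroot β)) (x : V') : D.pair α x = D.pair β x := by
  have hα' := two_mul_corootForm_coroot hα x
  rw [h.corootForm_eq, two_mul_corootForm_coroot hβ, h.corootForm_self_eq] at hα'
  exact (mul_right_cancel₀ (corootForm_coroot_pos hβ).ne' hα').symm

theorem IsRadical.reflV' (hz : D.IsRadical z) (hε : ε ∈ D.R) :
    D.IsRadical (D.reflV' ε hε z) := fun α hα => by
  rw [pair_reflV']; exact hz _ (reflV_mem hε hα)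

theorem reflV'_reflV' (hε : ε ∈ D.R) (x : V') : D.reflV' ε hε (D.reflV' ε hε x) = x :=
  Module.involutive_reflection _ x

theorem reflV'_apply_of_pair_eq_one (hε : ε ∈ D.R) (h : D.pair ε x = 1) :
    D.reflV' ε hε x = x - D.coroot ε := by
  rw [reflV'_apply, h, one_smul]

/-- Reflections permute the classes of coroots modulo the radical. -/
theorem coroot_eq_reflV'_of_isRadical (hε : ε ∈ D.R)
    (h : ∀ δ ∈ D.R, D.IsRadical (D.coroot δ - x) → D.coroot δ = x) :
    ∀ δ ∈ D.R, D.IsRadical (D.coroot δ - D.reflV' ε hε x) →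
      D.coroot δ = D.reflV' ε hε x := by
  intro δ hδ hrad
  obtain ⟨δ', hδ', hδ'eq⟩ := exists_coroot_eq_reflV' hε hδ
  have := h δ' hδ' (by
    rw [hδ'eq, ← reflV'_reflV' hε x, ← map_sub]
    exact hrad.reflV' hε)
  rw [← this, hδ'eq, reflV'_reflV']

theorem corootForm_nonneg_of_dominant_of_mem_Qpos (hμ : D.Dominant μ) (hq : q ∈ D.Qpos) :
    0 ≤ D.corootForm μ q := by
  refine AddSubmonoid.map_nonneg_of_mem_closure (D.corootForm μ) ?_ hq
  rintro _ ⟨γ, hγ, rfl⟩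
  have h := two_mul_corootForm_coroot (Rpos_subset hγ) μ
  have := mul_nonneg (hμ γ hγ) (corootForm_coroot_pos (Rpos_subset hγ)).le
  rw [corootForm_comm]
  linarith

theorem corootForm_self_pos_of_mem_Qpos (hq : q ∈ D.Qpos) (hq0 : q ≠ 0) :
    0 < D.corootForm q q := by
  refine (corootForm_self_nonneg q).lt_of_ne fun h => hq0 ?_
  exact eq_zero_of_mem_Qpos_of_ht_nonpos hq
    (isRadical_of_corootForm_self_eq_zero h.symm).ht_eq_zero.le

theorem corootForm_lt_add (hμ : D.Dominant μ) (hq : q ∈ D.Qpos) (hq0 : q ≠ 0) :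
    D.corootForm μ μ < D.corootForm (μ + q) (μ + q) := by
  have := corootForm_nonneg_of_dominant_of_mem_Qpos hμ hq
  have := corootForm_self_pos_of_mem_Qpos hq hq0
  have := corootForm_comm (D := D) q μ
  simp only [map_add, LinearMap.add_apply]
  linarith

theorem eq_of_leQ_of_corootForm_le (hν : D.Dominant ν) (hle : D.leQ ν lam)
    (hN : D.corootForm lam lam ≤ D.corootForm ν ν) : ν = lam := by
  by_contra hne
  have := corootForm_lt_add hν hle (sub_ne_zero.2 (Ne.symm hne))
  rw [add_sub_cancel] at this
  linarith

/-- Descending from `μ + q` to `μ` by reflections `s_ε`, `ε ∈ R₊`, each of which subtracts `ε∨`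
(that is, `⟨ε, μ + q⟩ = 1`), preserves the length. -/
theorem corootForm_add_eq_of_descent (P : V' → Prop)
    (hP : ∀ q ∈ D.Qpos, ∀ ε ∈ D.Rpos, P (μ + q) → 0 < D.pair ε q →
      q - D.coroot ε ∈ D.Qpos → D.pair ε (μ + q) = 1 ∧ P (μ + q - D.coroot ε))
    (hq : q ∈ D.Qpos) (hPq : P (μ + q)) :
    D.corootForm (μ + q) (μ + q) = D.corootForm μ μ := by
  obtain ⟨n, hn⟩ := exists_nat_ge (D.ht q)
  induction n generalizing q with
  | zero => rw [eq_zero_of_mem_Qpos_of_ht_nonpos hq (by simpa using hn), add_zero]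
  | succ n ih =>
    rcases eq_or_ne q 0 with rfl | hq0
    · rw [add_zero]
    obtain ⟨_, ⟨ε, hε, rfl⟩, hqε, hq'⟩ := AddSubmonoid.exists_map_pos_sub_mem_closure
      (D.corootForm q) hq (corootForm_self_pos_of_mem_Qpos hq hq0)
    have hεR := Rpos_subset hε
    have hpos : 0 < D.pair ε q := by
      have := two_mul_corootForm_coroot hεR q
      rw [corootForm_comm] at hqε
      exact pos_of_mul_pos_left (by linarith) (corootForm_coroot_pos hεR).le
    obtain ⟨h1, hP'⟩ := hP q hq ε hε hPq hpos hq'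
    rw [← corootForm_reflV' hεR, reflV'_apply_of_pair_eq_one hεR h1, add_sub_assoc]
    refine ih hq' (by rwa [← add_sub_assoc]) ?_
    rw [map_sub]
    push_cast at hn
    linarith [two_le_ht_coroot hε]

theorem mem_MSet_of_isRadical (hX : z ∈ D.X) (hz : D.IsRadical z) (h0 : z ≠ 0) :
    z ∈ D.MSet := by
  refine ⟨⟨hX, fun α hα => (hz α (Rpos_subset hα)).ge⟩, h0,
    fun ν hν _ hle => eq_of_leQ_of_corootForm_le hν.2 hle ?_⟩
  rw [hz.corootForm_eq_zero]
  exact corootForm_self_nonneg ν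

theorem mem_MSet_of_forall_pair_le_one (hlam : lam ∈ D.Xplus) (h0 : lam ≠ 0)
    (h : ∀ γ ∈ D.R, D.pair γ lam ≤ 1) : lam ∈ D.MSet := by
  refine ⟨hlam, h0, fun ν hν _ hle => eq_of_leQ_of_corootForm_le hν.2 hle (le_of_eq ?_)⟩
  have key := corootForm_add_eq_of_descent (fun y => y ∈ D.X ∧ ∀ γ ∈ D.R, D.pair γ y ≤ 1)
    ?_ hle (by rw [add_sub_cancel]; exact ⟨hlam.1, h⟩)
  · rwa [add_sub_cancel] at key
  rintro q - ε hε ⟨hX, hle1⟩ hpos -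
  have hεR := Rpos_subset hε
  have h1 : D.pair ε (ν + q) = 1 := le_antisymm (hle1 ε hεR)
    (one_le_of_pos_of_int (D.pair_X_int ε hεR _ hX) (by rw [map_add]; linarith [hν.2 ε hε]))
  refine ⟨h1, D.X.sub_mem hX (D.coroot_mem_X ε hεR), fun γ hγ => ?_⟩
  rw [← reflV'_apply_of_pair_eq_one hεR h1, pair_reflV']
  exact hle1 _ (reflV_mem hεR hγ)

theorem IsCorootFormShort.of_coroot_eq_reflV' (hγ : D.IsCorootFormShort γ) (hε : ε ∈ D.R)
    (h1 : D.pair ε (D.coroot γ) = 1) (hδ : δ ∈ D.R)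
    (hδeq : D.coroot δ = D.reflV' ε hε (D.coroot γ)) : D.IsCorootFormShort δ := by
  have hεδ : D.Linked ε δ := ⟨hε, hδ, by
    rw [hδeq, reflV'_apply_of_pair_eq_one hε h1, map_sub, h1, D.pair_self_eq_two ε hε]
    norm_num⟩
  have hεγ : D.Linked ε γ := ⟨hε, hγ.1, by rw [h1]; norm_num⟩
  exact hγ.of_sameComponent hδ (hεδ.symm.sameComponent.trans hεγ.sameComponent)
    (by rw [hδeq, corootForm_reflV'])

/-- Every dominant `ν ≤ c∨` is reached from `c∨` by reflections of short coroots, hence has the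
same length as `c∨`. -/
theorem coroot_mem_MSet (hc : D.IsCorootFormShort c) (hdom : D.Dominant (D.coroot c))
    (hsing : ∀ δ ∈ D.R, D.IsRadical (D.coroot δ - D.coroot c) → D.coroot δ = D.coroot c) :
    D.coroot c ∈ D.MSet := by
  refine ⟨⟨D.coroot_mem_X c hc.1, hdom⟩, coroot_ne_zero hc.1,
    fun ν hν hν0 hle => eq_of_leQ_of_corootForm_le hν.2 hle (le_of_eq ?_)⟩
  have key := corootForm_add_eq_of_descent (fun y => ∃ γ, D.IsCorootFormShort γ ∧
    D.coroot γ = y ∧ ∀ δ ∈ D.R, D.IsRadical (D.coroot δ - y) → D.coroot δ = y)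
    ?_ hle (by rw [add_sub_cancel]; exact ⟨c, hc, rfl, hsing⟩)
  · rwa [add_sub_cancel] at key
  rintro q - ε hε ⟨γ, hγ, hy, hγsing⟩ hpos hq'
  have hεR := Rpos_subset hε
  have hm : 0 < D.pair ε (D.coroot γ) := by rw [hy, map_add]; linarith [hν.2 ε hε]
  have hN := hγ.2 ε hεR (Linked.sameComponent ⟨hεR, hγ.1, hm.ne'⟩)
  rcases eq_one_or_eq_two_of_int (D.crystallographic ε hεR γ hγ.1) hm
    (pair_coroot_le_two hεR hN) with h1 | h2
  · obtain ⟨δ, hδ, hδeq⟩ := exists_coroot_eq_reflV' hεR hγ.1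
    have hstep : D.coroot γ - D.coroot ε = D.coroot δ := by
      rw [hδeq, reflV'_apply_of_pair_eq_one hεR h1]
    rw [← hy, hstep]
    refine ⟨h1, δ, hγ.of_coroot_eq_reflV' hεR h1 hδ hδeq, rfl, ?_⟩
    rw [hδeq]
    exact coroot_eq_reflV'_of_isRadical hεR (hy ▸ hγsing)
  · -- `ε∨ = γ∨` would force `ν = -(q - ε∨) ≤ 0`, hence `ν = 0`
    exfalso
    have hεγ := hγsing ε hεR (by
      rw [← hy, ← neg_sub]; exact (isRadical_coroot_sub_of_pair_eq_two hεR hN h2).neg)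
    have hsum : D.ht ν + D.ht (q - D.coroot ε) = 0 := by
      rw [← map_add, hεγ]; simp
    have := ht_nonneg_of_dominant hν.2
    have := ht_nonneg_of_mem_Qpos hq'
    have hq'0 := eq_zero_of_mem_Qpos_of_ht_nonpos hq' (by linarith)
    rw [sub_eq_zero] at hq'0
    exact hν0 (by rw [← add_sub_cancel_right ν q, ← hεγ, hq'0, sub_self])

theorem pair_reflV'_of_coroot_eq_reflV' (hε : ε ∈ D.R) (hγ : γ ∈ D.R) (hδ : δ ∈ D.R)
    (hδeq : D.coroot δ = D.reflV' ε hε (D.coroot γ)) (x : V') :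
    D.pair δ (D.reflV' ε hε x) = D.pair γ x := by
  have h := two_mul_corootForm_coroot hδ (D.reflV' ε hε x)
  rw [hδeq, corootForm_isReflInvariant, corootForm_reflV', two_mul_corootForm_coroot hγ] at h
  exact (mul_right_cancel₀ (corootForm_coroot_pos hγ).ne' h).symm

/-- The witness is `a`, `s_γ a` or `-s_γ a`. -/
theorem exists_shorter_two_le_pair (hX : lam ∈ D.X) (hγ : γ ∈ D.R) (hγlam : 2 ≤ D.pair γ lam)
    (ha : D.Linked a γ)
    (hlt : D.corootForm (D.coroot a) (D.coroot a) < D.corootForm (D.coroot γ) (D.coroot γ))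
    (ha0 : 0 ≤ D.pair a lam) :
    ∃ δ ∈ D.R, D.corootForm (D.coroot δ) (D.coroot δ) <
      D.corootForm (D.coroot γ) (D.coroot γ) ∧ 2 ≤ D.pair δ lam := by
  have haR := ha.1
  by_cases ha2 : 2 ≤ D.pair a lam
  · exact ⟨a, haR, hlt, ha2⟩
  have ha1 := le_one_of_lt_two_of_int (D.pair_X_int a haR lam hX) (not_le.1 ha2)
  set t := D.pair γ (D.coroot a)
  set Na := D.corootForm (D.coroot a) (D.coroot a)
  set Nγ := D.corootForm (D.coroot γ) (D.coroot γ)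
  have hNa := corootForm_coroot_pos haR
  obtain ⟨δ, hδ, hδeq⟩ := exists_coroot_eq_reflV' hγ haR
  have hδN : D.corootForm (D.coroot δ) (D.coroot δ) = Na := by rw [hδeq, corootForm_reflV']
  have hδlam : D.pair δ lam * Na = D.pair a lam * Na - t * (D.pair γ lam * Nγ) := by
    have h := two_mul_corootForm_coroot hδ lam
    rw [hδN, hδeq, reflV'_apply, map_sub, map_smul, LinearMap.sub_apply, LinearMap.smul_apply,
      smul_eq_mul] at h
    linear_combination -h + two_mul_corootForm_coroot haR lam -
      t * two_mul_corootForm_coroot hγ lam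
  have hγNa : 2 * Na < D.pair γ lam * Nγ := by nlinarith
  obtain ⟨n, hn⟩ : ∃ n : ℤ, t = n := D.crystallographic γ hγ a haR
  rcases lt_or_gt_of_ne ha.symm.2.2 with htneg | htpos
  · have ht1 := one_le_of_pos_of_int (r := -t) ⟨-n, by rw [hn, Int.cast_neg]⟩ (neg_pos.2 htneg)
    refine ⟨δ, hδ, hδN ▸ hlt, (lt_of_mul_lt_mul_right ?_ hNa.le).le⟩
    nlinarith
  · have ht1 := one_le_of_pos_of_int ⟨n, hn⟩ htpos
    have hδneg : D.pair δ lam < -1 := lt_of_mul_lt_mul_right (by nlinarith) hNa.le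
    refine ⟨-δ, D.neg_mem δ hδ, ?_, ?_⟩
    · simp only [D.coroot_neg δ hδ, map_neg, LinearMap.neg_apply, neg_neg, hδN]
      exact hlt
    · by_contra! h2
      have := le_one_of_lt_two_of_int (D.pair_X_int _ (D.neg_mem δ hδ) lam hX) h2
      rw [map_neg, LinearMap.neg_apply] at this
      linarith

theorem exists_isCorootFormShort_two_le_pair (hX : lam ∈ D.X)
    (h : ∃ γ ∈ D.R, 2 ≤ D.pair γ lam) : ∃ γ, D.IsCorootFormShort γ ∧ 2 ≤ D.pair γ lam := by
  obtain ⟨γ₀, hγ₀, hγ₀lam⟩ := h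
  obtain ⟨γ, hγS, hmin⟩ := (D.R.filter fun γ => 2 ≤ D.pair γ lam).exists_min_image
    (fun γ => D.corootForm (D.coroot γ) (D.coroot γ)) ⟨γ₀, Finset.mem_filter.2 ⟨hγ₀, hγ₀lam⟩⟩
  rw [Finset.mem_filter] at hγS
  refine ⟨γ, isCorootFormShort_of_forall_linked hγS.1 fun a ha => ?_, hγS.2⟩
  by_contra! hlt
  obtain ⟨a', ha', hlt', ha'0⟩ : ∃ a', D.Linked a' γ ∧ D.corootForm (D.coroot a') (D.coroot a') <
      D.corootForm (D.coroot γ) (D.coroot γ) ∧ 0 ≤ D.pair a' lam := by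
    rcases le_total 0 (D.pair a lam) with h0 | h0
    · exact ⟨a, ha, hlt, h0⟩
    refine ⟨-a, ⟨D.neg_mem a ha.1, ha.2.1, ?_⟩, ?_, ?_⟩
    · simpa using ha.2.2
    · simpa [D.coroot_neg a ha.1] using hlt
    · simpa using h0
  obtain ⟨δ, hδ, hδlt, hδlam⟩ := exists_shorter_two_le_pair hX hγS.1 hγS.2 ha' hlt' ha'0
  exact (hmin δ (Finset.mem_filter.2 ⟨hδ, hδlam⟩)).not_gt hδlt

/-- Among the short roots pairing at least `2` with `lam`, one whose coroot has minimal height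
can be subtracted from `lam` keeping it dominant. -/
theorem exists_dominant_sub_coroot (hX : lam ∈ D.X) (hdom : D.Dominant lam)
    (h : ∃ γ ∈ D.R, 2 ≤ D.pair γ lam) :
    ∃ c ∈ D.Rpos, D.IsCorootFormShort c ∧ D.Dominant (lam - D.coroot c) := by
  obtain ⟨γ₀, hγ₀, hγ₀lam⟩ := exists_isCorootFormShort_two_le_pair hX h
  obtain ⟨c, hcT, hmin⟩ :=
    (D.R.filter fun γ => D.IsCorootFormShort γ ∧ 2 ≤ D.pair γ lam).exists_min_image
      (fun γ => D.ht (D.coroot γ)) ⟨γ₀, Finset.mem_filter.2 ⟨hγ₀.1, hγ₀, hγ₀lam⟩⟩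
  obtain ⟨hcR, hc, hclam⟩ := Finset.mem_filter.1 hcT
  have hcpos : c ∈ D.Rpos := by
    by_contra hc'
    have := hdom _ (neg_mem_Rpos_of_notMem hcR hc')
    rw [map_neg, LinearMap.neg_apply] at this
    linarith
  refine ⟨c, hcpos, hc, fun α hα => ?_⟩
  have hαR := Rpos_subset hα
  by_contra! hneg
  rw [map_sub, sub_neg] at hneg
  have hm : 0 < D.pair α (D.coroot c) := (hdom α hα).trans_lt hneg
  have hN := hc.2 α hαR (Linked.sameComponent ⟨hαR, hcR, hm.ne'⟩)
  rcases eq_one_or_eq_two_of_int (D.crystallographic α hαR c hcR) hm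
    (pair_coroot_le_two hαR hN) with h1 | h2
  · -- then `⟨α, lam⟩ = 0`, and `s_α c` is an admissible root of smaller height
    have hα0 : D.pair α lam = 0 := by
      refine le_antisymm (not_lt.1 fun hpos => ?_) (hdom α hα)
      linarith [one_le_of_pos_of_int (D.pair_X_int α hαR lam hX) hpos]
    obtain ⟨δ, hδ, hδeq⟩ := exists_coroot_eq_reflV' hαR hcR
    have hδlam := pair_reflV'_of_coroot_eq_reflV' hαR hcR hδ hδeq lam
    rw [reflV'_apply, hα0, zero_smul, sub_zero] at hδlam
    have := hmin δ (Finset.mem_filter.2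
      ⟨hδ, hc.of_coroot_eq_reflV' hαR h1 hδ hδeq, hδlam ▸ hclam⟩)
    rw [hδeq, reflV'_apply_of_pair_eq_one hαR h1, map_sub] at this
    linarith [ht_coroot_pos hα]
  · have := pair_eq_of_isRadical_coroot_sub hcR hαR
      (isRadical_coroot_sub_of_pair_eq_two hαR hN h2) lam
    linarith

theorem exists_two_le_pair_of_notMem_MSet (hlam : lam ∈ D.Xplus) (h0 : lam ≠ 0)
    (hM : lam ∉ D.MSet) : ∃ γ ∈ D.R, 2 ≤ D.pair γ lam := by
  by_contra! h
  exact hM (mem_MSet_of_forall_pair_le_one hlam h0 fun γ hγ =>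
    le_one_of_lt_two_of_int (D.pair_X_int γ hγ lam hlam.1) (h γ hγ))

theorem exists_isRadical_coroot_sub (hc : D.IsCorootFormShort c)
    (hdom : D.Dominant (D.coroot c)) (hM : D.coroot c ∉ D.MSet) :
    ∃ δ, D.IsCorootFormShort δ ∧ D.IsRadical (D.coroot c - D.coroot δ) ∧
      D.coroot c - D.coroot δ ≠ 0 := by
  by_contra! h
  refine hM (coroot_mem_MSet hc hdom fun δ hδ hrad => ?_)
  by_contra hne
  have hδc : D.Linked δ c := ⟨hδ, hc.1, by
    rw [pair_eq_of_isRadical_coroot_sub hδ hc.1 hrad, D.pair_self_eq_two c hc.1]; norm_num⟩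
  have hδshort := hc.of_sameComponent hδ hδc.sameComponent hrad.corootForm_self_eq
  exact hne (sub_eq_zero.1 (h δ hδshort (by simpa using hrad.neg))).symm

variable (D) in
def IsDominantChain (μ lam : V') {k : ℕ} (β : Fin k → V) : Prop :=
  (∀ i, D.IsShortCoroot (β i)) ∧ lam = μ + ∑ i, D.coroot (β i) ∧
    ∀ j : ℕ, j ≤ k → D.Dominant (μ + ∑ i ∈ Finset.univ.filter (fun i : Fin k => (i : ℕ) < j),
      D.coroot (β i))

theorem isDominantChain_nil (hμ : D.Dominant μ) : D.IsDominantChain μ μ (Fin.elim0 : Fin 0 → V) :=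
  ⟨fun i => i.elim0, by simp, fun j _ => by simpa using hμ⟩

theorem IsDominantChain.snoc {k : ℕ} {β : Fin k → V} (h : D.IsDominantChain μ lam β)
    (hc : D.IsShortCoroot c) (hdom : D.Dominant (lam + D.coroot c)) :
    D.IsDominantChain μ (lam + D.coroot c) (Fin.snoc β c) := by
  obtain ⟨hshort, hsum, hpartial⟩ := h
  refine ⟨Fin.lastCases (by simpa using hc) fun i => by simpa using hshort i, ?_,
    fun j hj => ?_⟩
  · rw [Fin.sum_univ_castSucc, hsum]
    simp only [Fin.snoc_castSucc, Fin.snoc_last, add_assoc]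
  rw [Fin.sum_filter_val_lt_snoc]
  rcases Nat.lt_or_ge k j with hkj | hjk
  · rw [if_pos hkj, Finset.filter_true_of_mem fun i _ => i.2.trans hkj, ← add_assoc, ← hsum]
    exact hdom
  · rw [if_neg hjk.not_gt, add_zero]
    exact hpartial j hjk

theorem exists_mem_MSet_isDominantChain (hlam : lam ∈ D.Xplus) (h0 : lam ≠ 0) :
    ∃ μ ∈ D.MSet, ∃ (k : ℕ) (β : Fin k → V), D.IsDominantChain μ lam β := by
  obtain ⟨n, hn⟩ := exists_nat_gt (D.ht lam)
  induction n generalizing lam with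
  | zero => exact absurd hn (by simpa using ht_nonneg_of_dominant hlam.2)
  | succ n ih =>
    by_cases hM : lam ∈ D.MSet
    · exact ⟨lam, hM, 0, Fin.elim0, isDominantChain_nil hlam.2⟩
    obtain ⟨c, hcpos, hc, hdom⟩ :=
      exists_dominant_sub_coroot hlam.1 hlam.2 (exists_two_le_pair_of_notMem_MSet hlam h0 hM)
    have hsub : lam - D.coroot c + D.coroot c = lam := sub_add_cancel _ _
    by_cases hc0 : lam - D.coroot c = 0
    · obtain rfl : lam = D.coroot c := sub_eq_zero.1 hc0
      obtain ⟨δ, hδ, hrad, hne⟩ := exists_isRadical_coroot_sub hc hlam.2 hM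
      have hμ := mem_MSet_of_isRadical (D.X.sub_mem hlam.1 (D.coroot_mem_X δ hδ.1)) hrad hne
      have := (isDominantChain_nil hμ.1.2).snoc hδ.isShortCoroot
        (by rw [sub_add_cancel]; exact hlam.2)
      rw [sub_add_cancel] at this
      exact ⟨_, hμ, 1, _, this⟩
    obtain ⟨μ, hμ, k, β, hβ⟩ := ih ⟨D.X.sub_mem hlam.1 (D.coroot_mem_X c hc.1), hdom⟩ hc0
      (by rw [map_sub]; push_cast at hn; linarith [two_le_ht_coroot hcpos])
    have := hβ.snoc hc.isShortCoroot (by rw [hsub]; exact hlam.2)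
    rw [hsub] at this
    exact ⟨μ, hμ, k + 1, _, this⟩

end RootSystemData

theorem dominant_chain_from_M_by_short_coroots {V V' : Type} [AddCommGroup V] [Module ℝ V] [FiniteDimensional ℝ V]
    [AddCommGroup V'] [Module ℝ V'] [FiniteDimensional ℝ V']
    (D : RootSystemData V V')
    (lam : V') (hlam : lam ∈ D.Xplus) (h0 : lam ≠ 0) :
    ∃ μ ∈ D.MSet, ∃ (k : ℕ) (β : Fin k → V),
      (∀ i, D.IsShortCoroot (β i)) ∧
      lam = μ + ∑ i, D.coroot (β i) ∧
      ∀ j : ℕ, j ≤ k →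
        D.Dominant (μ + ∑ i ∈ Finset.univ.filter (fun i : Fin k => (i : ℕ) < j),
          D.coroot (β i)) :=
  RootSystemData.exists_mem_MSet_isDominantChain hlam h0
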